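/- Let α be an irrational number not equivalent to (1+√5)/2 and not equivalent to (1+√17)/2, whose continued fraction expansion has aₙ ∈ {1, 3} for infinitely many n. If for infinitely many n one has a_{n−1} = 3, aₙ = 1, a_{n+1} = 3, then 𝔨(α) ≤ 136/145. -/

import Mathlib

open Filter

/-- The tails `αₙ = [aₙ; aₙ₊₁, …]` of the continued fraction of `α`. -/
noncomputable def cfTail (α : ℝ) : ℕ → ℝ
  | 0 => α
  | n + 1 => (Int.fract (cfTail α n))⁻¹

/-- The partial quotients `aₙ` of the continued fraction of `α`. -/
noncomputable def cfDigit (α : ℝ) (n : ℕ) : ℤ := ⌊cfTail α n⌋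

/-- Value `[a; b, c, …]` of a finite continued fraction given by a list. -/
noncomputable def finCF : List ℤ → ℝ
  | [] => 0
  | a :: l => (a : ℝ) + (finCF l)⁻¹

/-- `α*ₙ = [0; aₙ, aₙ₋₁, …, a₁]`. -/
noncomputable def cfStar (α : ℝ) (n : ℕ) : ℝ :=
  (finCF (((List.range' 1 n).reverse).map (cfDigit α)))⁻¹

/-- Numerators `pₙ` of the convergents of `α`. -/
noncomputable def cfNum (α : ℝ) : ℕ → ℤ
  | 0 => cfDigit α 0
  | 1 => cfDigit α 1 * cfDigit α 0 + 1
  | n + 2 => cfDigit α (n + 2) * cfNum α (n + 1) + cfNum α n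

/-- Denominators `qₙ` of the convergents of `α`. -/
noncomputable def cfDen (α : ℝ) : ℕ → ℤ
  | 0 => 1
  | 1 => cfDigit α 1
  | n + 2 => cfDigit α (n + 2) * cfDen α (n + 1) + cfDen α n

/-- The irrationality measure function `ψ_α^[2]` for "second best" approximations. -/
noncomputable def psi2 (α : ℝ) (t : ℝ) : ℝ :=
  sInf { x : ℝ | ∃ p q : ℤ, 1 ≤ q ∧ (q : ℝ) ≤ t ∧
    (∀ n : ℕ, (p, q) ≠ (cfNum α n, cfDen α n)) ∧ x = |(q : ℝ) * α - (p : ℝ)| }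

/-- The Diophantine constant `𝔨(α) = liminf_{t → ∞} t · ψ_α^[2](t)`. -/
noncomputable def kConst (α : ℝ) : ℝ := liminf (fun t : ℝ => t * psi2 α t) atTop

/-- Two numbers are equivalent if the tails of their continued fraction expansions
coincide: `a_{n+k} = b_{m+k}` for all `k ≥ 1`, for some positive integers `m`, `n`. -/
def CFEquiv (α β : ℝ) : Prop :=
  ∃ n m : ℕ, 0 < n ∧ 0 < m ∧ ∀ k : ℕ, 0 < k → cfDigit α (n + k) = cfDigit β (m + k)

/-- The spectrum `𝕃₂` of values of `𝔨`. -/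
def L2 : Set ℝ := { l : ℝ | ∃ α : ℝ, Irrational α ∧ l = kConst α }

/-- `κ¹ₙ(α) = (1 + α*ₙ₋₁)(αₙ − 1)/(αₙ + α*ₙ₋₁)`. -/
noncomputable def kappa1 (α : ℝ) (n : ℕ) : ℝ :=
  (1 + cfStar α (n - 1)) * (cfTail α n - 1) / (cfTail α n + cfStar α (n - 1))

/-- `κ²ₙ(α) = (1 − α*ₙ)(αₙ₊₁ + 1)/(αₙ₊₁ + α*ₙ)`. -/
noncomputable def kappa2 (α : ℝ) (n : ℕ) : ℝ :=
  (1 - cfStar α n) * (cfTail α (n + 1) + 1) / (cfTail α (n + 1) + cfStar α n)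

/-- `κ⁴ₙ(α) = 4/(αₙ + α*ₙ₋₁)`. -/
noncomputable def kappa4 (α : ℝ) (n : ℕ) : ℝ :=
  4 / (cfTail α n + cfStar α (n - 1))

/-!
Besides the convergents, `2 qₖ` (when `aₖ₊₁ ≥ 2`) and `qₖ + qₖ₊₁` (when `aₖ₊₂ ≥ 2`) are
denominators of good approximations that are not convergents, since they lie strictly between
consecutive `qₙ`. Their errors are `2 |eₖ|` and `|eₖ| (1 - 1/αₖ₊₂)`, where `eₖ = qₖ α - pₖ`
satisfies `|eₖ| = 1 / (αₖ₊₁ qₖ + qₖ₋₁)`. If infinitely many partial quotients are at least `5`,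
the first candidate gives `t ψ(t) ≤ 4/5`. Otherwise the partial quotients are eventually at most
`4`, and at every late block `3, 1, 3` one of the two candidates, chosen according to the
partial quotient that follows the block, gives `t ψ(t) ≤ 136/145`.
-/

section

variable {α : ℝ}

lemma cfTail_succ (n : ℕ) : cfTail α (n + 1) = (Int.fract (cfTail α n))⁻¹ := rfl

lemma cfTail_eq_cfDigit_add_inv (n : ℕ) :
    cfTail α n = cfDigit α n + (cfTail α (n + 1))⁻¹ := by
  rw [cfTail_succ, inv_inv, cfDigit, Int.floor_add_fract]

lemma irrational_cfTail (hα : Irrational α) (n : ℕ) : Irrational (cfTail α n) := by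
  induction n with
  | zero => exact hα
  | succ n ih =>
    rw [cfTail_succ, ← Int.self_sub_floor]
    exact (ih.sub_intCast _).inv

lemma one_lt_cfTail_succ (hα : Irrational α) (n : ℕ) : 1 < cfTail α (n + 1) := by
  have hpos : 0 < Int.fract (cfTail α n) :=
    Int.fract_pos.2 ((irrational_cfTail hα n).ne_int _)
  rw [cfTail_succ]
  exact (one_lt_inv₀ hpos).2 (Int.fract_lt_one _)

lemma cfDigit_lt_cfTail (hα : Irrational α) (n : ℕ) : (cfDigit α n : ℝ) < cfTail α n :=
  (Int.floor_le _).lt_of_ne ((irrational_cfTail hα n).ne_int _).symm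

lemma cfTail_lt_cfDigit_add_one (n : ℕ) : cfTail α n < cfDigit α n + 1 :=
  Int.lt_floor_add_one _

lemma one_le_cfDigit_succ (hα : Irrational α) (n : ℕ) : 1 ≤ cfDigit α (n + 1) :=
  Int.le_floor.2 (by exact_mod_cast (one_lt_cfTail_succ hα n).le)

lemma cfDen_add_two (n : ℕ) :
    cfDen α (n + 2) = cfDigit α (n + 2) * cfDen α (n + 1) + cfDen α n := rfl

lemma one_le_cfDen (hα : Irrational α) (n : ℕ) : 1 ≤ cfDen α n := by
  induction n using Nat.twoStepInduction with
  | zero => exact le_rfl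
  | one => exact one_le_cfDigit_succ hα 0
  | more n h0 h1 =>
    rw [cfDen_add_two]
    nlinarith [one_le_cfDigit_succ hα (n + 1)]

lemma cfDen_le_cfDen_succ (hα : Irrational α) (n : ℕ) : cfDen α n ≤ cfDen α (n + 1) := by
  cases n with
  | zero => exact one_le_cfDigit_succ hα 0
  | succ n =>
    rw [cfDen_add_two]
    nlinarith [one_le_cfDigit_succ hα (n + 1), one_le_cfDen hα n, one_le_cfDen hα (n + 1)]

lemma cfDen_monotone (hα : Irrational α) : Monotone (cfDen α) :=
  monotone_nat_of_le_succ (cfDen_le_cfDen_succ hα)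

lemma cfDen_succ_lt (hα : Irrational α) (n : ℕ) : cfDen α (n + 1) < cfDen α (n + 2) := by
  rw [cfDen_add_two]
  nlinarith [one_le_cfDigit_succ hα (n + 1), one_le_cfDen hα n, one_le_cfDen hα (n + 1)]

lemma natCast_le_cfDen_succ (hα : Irrational α) (n : ℕ) : (n : ℤ) ≤ cfDen α (n + 1) := by
  induction n with
  | zero => exact (one_le_cfDen hα 1).trans' zero_le_one
  | succ n ih => push_cast; linarith [cfDen_succ_lt hα n]

lemma tendsto_cfDen (hα : Irrational α) : Tendsto (fun n ↦ (cfDen α n : ℝ)) atTop atTop := by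
  refine (tendsto_add_atTop_iff_nat 1).1
    (tendsto_atTop_mono (fun n ↦ ?_) tendsto_natCast_atTop_atTop)
  exact_mod_cast natCast_le_cfDen_succ hα n

lemma ne_cfDen_of_lt_of_lt (hα : Irrational α) {q : ℤ} {k : ℕ}
    (h₁ : cfDen α (k + 1) < q) (h₂ : q < cfDen α (k + 2)) (n : ℕ) : q ≠ cfDen α n := by
  rintro rfl
  rcases le_or_gt n (k + 1) with h | h
  · exact h₁.not_ge (cfDen_monotone hα h)
  · exact h₂.not_ge (cfDen_monotone hα h)

lemma cfNum_add_two (n : ℕ) :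
    cfNum α (n + 2) = cfDigit α (n + 2) * cfNum α (n + 1) + cfNum α n := rfl

noncomputable def cfErr (α : ℝ) (n : ℕ) : ℝ := cfDen α n * α - cfNum α n

lemma cfErr_add_two (n : ℕ) :
    cfErr α (n + 2) = cfDigit α (n + 2) * cfErr α (n + 1) + cfErr α n := by
  simp only [cfErr, cfDen_add_two, cfNum_add_two]
  push_cast
  ring

lemma cfTail_mul_cfErr_succ_add (hα : Irrational α) (n : ℕ) :
    cfTail α (n + 2) * cfErr α (n + 1) + cfErr α n = 0 := by
  induction n with
  | zero =>
    have h₀ : α = cfDigit α 0 + (cfTail α 1)⁻¹ := cfTail_eq_cfDigit_add_inv 0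
    have h₁ : cfTail α 1 = cfDigit α 1 + (cfTail α 2)⁻¹ := cfTail_eq_cfDigit_add_inv 1
    have hinv₁ := mul_inv_cancel₀ (one_pos.trans (one_lt_cfTail_succ hα 0)).ne'
    have hinv₂ := mul_inv_cancel₀ (one_pos.trans (one_lt_cfTail_succ hα 1)).ne'
    simp only [cfErr, cfDen, cfNum]
    push_cast
    linear_combination (cfTail α 2 * cfDigit α 1 + 1) * h₀
      - cfTail α 2 * (cfTail α 1)⁻¹ * h₁ + cfTail α 2 * hinv₁ - (cfTail α 1)⁻¹ * hinv₂
  | succ n ih =>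
    have h := cfTail_eq_cfDigit_add_inv (α := α) (n + 2)
    have hinv : cfTail α (n + 3) * (cfTail α (n + 3))⁻¹ = 1 :=
      mul_inv_cancel₀ (one_pos.trans (one_lt_cfTail_succ hα (n + 2))).ne'
    rw [cfErr_add_two]
    linear_combination cfTail α (n + 3) * ih - cfTail α (n + 3) * cfErr α (n + 1) * h
      - cfErr α (n + 1) * hinv

lemma cfNum_mul_cfDen_sub (n : ℕ) :
    cfNum α (n + 1) * cfDen α n - cfNum α n * cfDen α (n + 1) = (-1) ^ n := by
  induction n with
  | zero => simp only [cfNum, cfDen]; ring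
  | succ n ih =>
    rw [cfDen_add_two, cfNum_add_two, pow_succ]
    linear_combination -ih

lemma abs_cfErr_succ (hα : Irrational α) (k : ℕ) :
    |cfErr α (k + 1)| = (cfTail α (k + 2) * cfDen α (k + 1) + cfDen α k)⁻¹ := by
  have hq₀ : (1 : ℝ) ≤ cfDen α k := by exact_mod_cast one_le_cfDen hα k
  have hq₁ : (1 : ℝ) ≤ cfDen α (k + 1) := by exact_mod_cast one_le_cfDen hα (k + 1)
  have ht := one_lt_cfTail_succ hα (k + 1)
  have hD : 0 < cfTail α (k + 2) * cfDen α (k + 1) + cfDen α k := by positivity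
  have hdet : ((cfNum α (k + 1) * cfDen α k - cfNum α k * cfDen α (k + 1) : ℤ) : ℝ) =
      (-1) ^ k := by
    exact_mod_cast cfNum_mul_cfDen_sub k
  have hprod :
      cfErr α (k + 1) * (cfTail α (k + 2) * cfDen α (k + 1) + cfDen α k) = -(-1) ^ k := by
    have h := cfTail_mul_cfErr_succ_add hα k
    rw [← hdet]
    simp only [cfErr] at h ⊢
    push_cast
    linear_combination (cfDen α (k + 1) : ℝ) * h
  refine eq_inv_of_mul_eq_one_left ?_
  rw [← abs_of_pos hD, ← abs_mul, hprod]
  simp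

lemma psi2_nonneg (t : ℝ) : 0 ≤ psi2 α t :=
  Real.sInf_nonneg (by rintro x ⟨p, q, -, -, -, rfl⟩; exact abs_nonneg _)

lemma mul_psi2_le_of_forall_ne_cfDen {p q : ℤ} (hq : 1 ≤ q) (hne : ∀ n, q ≠ cfDen α n) :
    (q : ℝ) * psi2 α q ≤ q * |q * α - p| := by
  refine mul_le_mul_of_nonneg_left (csInf_le ?_ ?_) (by positivity)
  · exact ⟨0, by rintro x ⟨p', q', -, -, -, rfl⟩; exact abs_nonneg _⟩
  · exact ⟨p, q, hq, le_rfl, fun n h ↦ hne n (congrArg Prod.snd h), rfl⟩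

lemma two_mul_cfDen_mul_psi2_le (hα : Irrational α) (k : ℕ) (hd : 2 ≤ cfDigit α (k + 2)) :
    (2 * cfDen α (k + 1) : ℝ) * psi2 α (2 * cfDen α (k + 1)) ≤
      4 * cfDen α (k + 1) / (cfTail α (k + 2) * cfDen α (k + 1) + cfDen α k) := by
  have hq₀ := one_le_cfDen hα k
  have hq₁ := one_le_cfDen hα (k + 1)
  have hne : ∀ n, 2 * cfDen α (k + 1) ≠ cfDen α n := by
    have h₂ := cfDen_add_two (α := α) k
    exact ne_cfDen_of_lt_of_lt hα (k := k) (by omega) (by nlinarith)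
  have h := mul_psi2_le_of_forall_ne_cfDen (p := 2 * cfNum α (k + 1)) (by omega) hne
  have herr : (2 * cfDen α (k + 1) : ℝ) * α - 2 * cfNum α (k + 1) = 2 * cfErr α (k + 1) := by
    rw [cfErr]; ring
  push_cast at h
  rw [herr, abs_mul, abs_two, abs_cfErr_succ hα k] at h
  exact h.trans_eq (by ring)

lemma two_mul_cfDen_mul_psi2_le_four_div (hα : Irrational α) (k : ℕ)
    (hd : 2 ≤ cfDigit α (k + 2)) :
    (2 * cfDen α (k + 1) : ℝ) * psi2 α (2 * cfDen α (k + 1)) ≤ 4 / cfTail α (k + 2) := by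
  have hq₀ : (1 : ℝ) ≤ cfDen α k := by exact_mod_cast one_le_cfDen hα k
  have hq₁ : (1 : ℝ) ≤ cfDen α (k + 1) := by exact_mod_cast one_le_cfDen hα (k + 1)
  have ht := one_lt_cfTail_succ hα (k + 1)
  refine (two_mul_cfDen_mul_psi2_le hα k hd).trans ?_
  rw [div_le_div_iff₀ (by positivity) (by positivity)]
  nlinarith

lemma cfDen_add_mul_psi2_le (hα : Irrational α) (k : ℕ) (hd : 2 ≤ cfDigit α (k + 3)) :
    (cfDen α (k + 1) + cfDen α (k + 2) : ℝ) * psi2 α (cfDen α (k + 1) + cfDen α (k + 2)) ≤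
      (cfDen α (k + 1) + cfDen α (k + 2)) * (1 - (cfTail α (k + 3))⁻¹) /
        (cfTail α (k + 2) * cfDen α (k + 1) + cfDen α k) := by
  have hq₁ := one_le_cfDen hα (k + 1)
  have hq₂ := one_le_cfDen hα (k + 2)
  have hne : ∀ n, cfDen α (k + 1) + cfDen α (k + 2) ≠ cfDen α n := by
    have h₃ : cfDen α (k + 3) = cfDigit α (k + 3) * cfDen α (k + 2) + cfDen α (k + 1) :=
      cfDen_add_two (k + 1)
    exact ne_cfDen_of_lt_of_lt hα (k := k + 1) (show cfDen α (k + 2) < _ by omega)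
      (show _ < cfDen α (k + 3) by nlinarith)
  have h := mul_psi2_le_of_forall_ne_cfDen (p := cfNum α (k + 1) + cfNum α (k + 2)) (by omega) hne
  have ht := one_lt_cfTail_succ hα (k + 2)
  have herr :
      (cfDen α (k + 1) + cfDen α (k + 2) : ℝ) * α - (cfNum α (k + 1) + cfNum α (k + 2)) =
        cfErr α (k + 1) * (1 - (cfTail α (k + 3))⁻¹) := by
    have hrec := cfTail_mul_cfErr_succ_add hα (k + 1)
    have hinv := mul_inv_cancel₀ (one_pos.trans ht).ne'
    simp only [cfErr] at hrec ⊢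
    linear_combination
      (cfTail α (k + 3))⁻¹ * hrec - (cfDen α (k + 2) * α - cfNum α (k + 2)) * hinv
  have hfac : 0 < 1 - (cfTail α (k + 3))⁻¹ := sub_pos.2 (inv_lt_one_of_one_lt₀ ht)
  push_cast at h
  rw [herr, abs_mul, abs_of_pos hfac, abs_cfErr_succ hα k] at h
  exact h.trans_eq (by ring)

lemma exists_mul_psi2_le_of_five_le_cfDigit (hα : Irrational α) (k : ℕ)
    (h : 5 ≤ cfDigit α (k + 2)) :
    ∃ t : ℝ, (cfDen α (k + 1) : ℝ) ≤ t ∧ t * psi2 α t ≤ 4 / 5 := by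
  have hq : (1 : ℝ) ≤ cfDen α (k + 1) := by exact_mod_cast one_le_cfDen hα (k + 1)
  have ht : (5 : ℝ) < cfTail α (k + 2) :=
    (cfDigit_lt_cfTail hα (k + 2)).trans_le' (by exact_mod_cast h)
  refine ⟨2 * cfDen α (k + 1), by linarith, ?_⟩
  refine (two_mul_cfDen_mul_psi2_le_four_div hα k (by omega)).trans ?_
  gcongr

variable {m : ℕ}

lemma sixteen_mul_cfDen_le (hα : Irrational α) (hb : cfDigit α (m + 2) ≤ 4)
    (h₃ : cfDigit α (m + 3) = 3) : 16 * cfDen α (m + 2) ≤ 5 * cfDen α (m + 3) := by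
  have hq₀ := one_le_cfDen hα m
  have hq₁ := one_le_cfDen hα (m + 1)
  have hrec₂ := cfDen_add_two (α := α) m
  have hrec₃ : cfDen α (m + 3) = 3 * cfDen α (m + 2) + cfDen α (m + 1) := by
    rw [← h₃]; exact cfDen_add_two (m + 1)
  have hq₂ : cfDen α (m + 2) ≤ 5 * cfDen α (m + 1) := by
    rw [hrec₂]; nlinarith [cfDen_le_cfDen_succ hα m]
  omega

lemma exists_mul_psi2_le_of_pattern_of_cfDigit_eq_one (hα : Irrational α)
    (hb₂ : cfDigit α (m + 2) ≤ 4) (h₃ : cfDigit α (m + 3) = 3)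
    (h₄ : cfDigit α (m + 4) = 1) (h₅ : cfDigit α (m + 5) = 3)
    (h₆ : cfDigit α (m + 6) = 1) (hb₈ : cfDigit α (m + 8) ≤ 4) :
    ∃ t : ℝ, (cfDen α (m + 4) : ℝ) ≤ t ∧ t * psi2 α t ≤ 136 / 145 := by
  have hq₃ : (1 : ℝ) ≤ cfDen α (m + 3) := by exact_mod_cast one_le_cfDen hα (m + 3)
  have hq₄ : (1 : ℝ) ≤ cfDen α (m + 4) := by exact_mod_cast one_le_cfDen hα (m + 4)
  have hratio : 16 * (cfDen α (m + 4) : ℝ) ≤ 21 * cfDen α (m + 3) := by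
    have hrec₄ : cfDen α (m + 4) = cfDen α (m + 3) + cfDen α (m + 2) := by
      rw [cfDen_add_two, h₄, one_mul]
    have := sixteen_mul_cfDen_le hα hb₂ h₃
    exact_mod_cast (show 16 * cfDen α (m + 4) ≤ 21 * cfDen α (m + 3) by omega)
  have ht₈ : cfTail α (m + 8) < 5 :=
    (cfTail_lt_cfDigit_add_one (m + 8)).trans_le
      (by exact_mod_cast (by omega : cfDigit α (m + 8) + 1 ≤ 5))
  have ht₇ : 6 / 5 < cfTail α (m + 7) := by
    have hd₇ : (1 : ℝ) ≤ cfDigit α (m + 7) := by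
      exact_mod_cast one_le_cfDigit_succ hα (m + 6)
    have : (1 : ℝ) / 5 < (cfTail α (m + 8))⁻¹ := by
      rw [one_div]; exact inv_strictAnti₀ (one_pos.trans (one_lt_cfTail_succ hα (m + 7))) ht₈
    linarith [cfTail_eq_cfDigit_add_inv (α := α) (m + 7)]
  have ht₆ : cfTail α (m + 6) < 11 / 6 := by
    have : (cfTail α (m + 7))⁻¹ < 5 / 6 := by
      rw [show (5 : ℝ) / 6 = (6 / 5)⁻¹ by norm_num]
      exact inv_strictAnti₀ (by norm_num) ht₇
    have h := cfTail_eq_cfDigit_add_inv (α := α) (m + 6)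
    rw [h₆] at h
    push_cast at h
    linarith
  have ht₅ : 39 / 11 < cfTail α (m + 5) := by
    have : 6 / 11 < (cfTail α (m + 6))⁻¹ := by
      rw [show (6 : ℝ) / 11 = (11 / 6)⁻¹ by norm_num]
      exact inv_strictAnti₀ (one_pos.trans (one_lt_cfTail_succ hα (m + 5))) ht₆
    have h := cfTail_eq_cfDigit_add_inv (α := α) (m + 5)
    rw [h₅] at h
    push_cast at h
    linarith
  refine ⟨2 * cfDen α (m + 4), by linarith, ?_⟩
  refine (two_mul_cfDen_mul_psi2_le hα (m + 3) (by rw [h₅]; norm_num)).trans ?_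
  rw [div_le_iff₀ (by positivity)]
  nlinarith

lemma exists_mul_psi2_le_of_pattern_of_two_le_cfDigit (hα : Irrational α)
    (hb₂ : cfDigit α (m + 2) ≤ 4) (h₃ : cfDigit α (m + 3) = 3)
    (h₄ : cfDigit α (m + 4) = 1) (h₅ : cfDigit α (m + 5) = 3)
    (h₆ : 2 ≤ cfDigit α (m + 6)) :
    ∃ t : ℝ, (cfDen α (m + 4) : ℝ) ≤ t ∧ t * psi2 α t ≤ 136 / 145 := by
  have hq₄₅ : (cfDen α (m + 4) : ℝ) ≤ cfDen α (m + 5) := by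
    exact_mod_cast cfDen_le_cfDen_succ hα (m + 4)
  have hq₄ : (1 : ℝ) ≤ cfDen α (m + 4) := by exact_mod_cast one_le_cfDen hα (m + 4)
  rcases le_or_gt (50 / 11 : ℝ) (cfTail α (m + 6)) with hu | hu
  · refine ⟨2 * cfDen α (m + 5), by linarith, ?_⟩
    refine (two_mul_cfDen_mul_psi2_le_four_div hα (m + 4) h₆).trans ?_
    rw [div_le_iff₀ (by linarith)]
    linarith
  · have hq₂ : (1 : ℝ) ≤ cfDen α (m + 2) := by exact_mod_cast one_le_cfDen hα (m + 2)
    have hq₃ : (1 : ℝ) ≤ cfDen α (m + 3) := by exact_mod_cast one_le_cfDen hα (m + 3)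
    have hratio : 16 * (cfDen α (m + 2) : ℝ) ≤ 5 * cfDen α (m + 3) := by
      exact_mod_cast sixteen_mul_cfDen_le hα hb₂ h₃
    have hrec₄ : (cfDen α (m + 4) : ℝ) = cfDen α (m + 3) + cfDen α (m + 2) := by
      rw [cfDen_add_two, h₄]; push_cast; ring
    have hrec₅ : (cfDen α (m + 5) : ℝ) = 3 * cfDen α (m + 4) + cfDen α (m + 3) := by
      rw [cfDen_add_two, h₅]; push_cast; ring
    have hu' : 11 / 50 < (cfTail α (m + 6))⁻¹ := by
      rw [show (11 : ℝ) / 50 = (50 / 11)⁻¹ by norm_num]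
      exact inv_strictAnti₀ (one_pos.trans (one_lt_cfTail_succ hα (m + 5))) hu
    have ht₅ : cfTail α (m + 5) = 3 + (cfTail α (m + 6))⁻¹ := by
      rw [cfTail_eq_cfDigit_add_inv (m + 5), h₅]; push_cast; ring
    refine ⟨cfDen α (m + 4) + cfDen α (m + 5), by linarith, ?_⟩
    refine (cfDen_add_mul_psi2_le hα (m + 3) h₆).trans ?_
    rw [div_le_iff₀ (by rw [ht₅]; positivity), ht₅, hrec₅, hrec₄]
    nlinarith [mul_le_mul_of_nonneg_right hu'.le (zero_le_one.trans hq₂),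
      mul_le_mul_of_nonneg_right hu'.le (zero_le_one.trans hq₃)]

lemma exists_mul_psi2_le_of_pattern (hα : Irrational α)
    (hb₂ : cfDigit α (m + 2) ≤ 4) (h₃ : cfDigit α (m + 3) = 3)
    (h₄ : cfDigit α (m + 4) = 1) (h₅ : cfDigit α (m + 5) = 3)
    (hb₈ : cfDigit α (m + 8) ≤ 4) :
    ∃ t : ℝ, (cfDen α (m + 4) : ℝ) ≤ t ∧ t * psi2 α t ≤ 136 / 145 := by
  rcases (one_le_cfDigit_succ hα (m + 5)).eq_or_lt with h₆ | h₆
  · exact exists_mul_psi2_le_of_pattern_of_cfDigit_eq_one hα hb₂ h₃ h₄ h₅ h₆.symm hb₈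
  · exact exists_mul_psi2_le_of_pattern_of_two_le_cfDigit hα hb₂ h₃ h₄ h₅ h₆

lemma frequently_of_frequently_cfDen_le (hα : Irrational α) {P : ℝ → Prop}
    (h : ∃ᶠ n in atTop, ∃ t, (cfDen α n : ℝ) ≤ t ∧ P t) : ∃ᶠ t in atTop, P t := by
  refine frequently_atTop.2 fun b ↦ ?_
  obtain ⟨n, ⟨t, hnt, ht⟩, hbn⟩ :=
    (h.and_eventually ((tendsto_cfDen hα).eventually_ge_atTop b)).exists
  exact ⟨t, hbn.trans hnt, ht⟩

lemma frequently_mul_psi2_le (hα : Irrational α)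
    (hpat : ∃ᶠ n in atTop,
      cfDigit α n = 3 ∧ cfDigit α (n + 1) = 1 ∧ cfDigit α (n + 2) = 3) :
    ∃ᶠ t in atTop, t * psi2 α t ≤ 136 / 145 := by
  refine frequently_of_frequently_cfDen_le hα (frequently_atTop.2 fun N ↦ ?_)
  by_cases hbdd : ∀ᶠ n in atTop, cfDigit α n ≤ 4
  · obtain ⟨M, hM⟩ := eventually_atTop.1 hbdd
    obtain ⟨n, hn, h₃, h₄, h₅⟩ := frequently_atTop.1 hpat (N + M + 3)
    obtain ⟨m, rfl⟩ : ∃ m, n = m + 3 := ⟨n - 3, by omega⟩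
    exact ⟨m + 4, by omega,
      exists_mul_psi2_le_of_pattern hα (hM _ (by omega)) h₃ h₄ h₅ (hM _ (by omega))⟩
  · obtain ⟨n, hn, hbig⟩ := frequently_atTop.1 (not_eventually.1 hbdd) (N + 2)
    obtain ⟨k, rfl⟩ : ∃ k, n = k + 2 := ⟨n - 2, by omega⟩
    obtain ⟨t, hkt, ht⟩ := exists_mul_psi2_le_of_five_le_cfDigit hα k (by omega)
    exact ⟨k + 1, by omega, t, hkt, ht.trans (by norm_num)⟩

end

theorem stmt_15_general (α : ℝ) (hα : Irrational α)
    (hpat : ∃ᶠ n in atTop,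
      cfDigit α n = 3 ∧ cfDigit α (n + 1) = 1 ∧ cfDigit α (n + 2) = 3) :
    kConst α ≤ 136 / 145 :=
  liminf_le_of_frequently_le (frequently_mul_psi2_le hα hpat)
    (isBoundedUnder_of_eventually_ge ((eventually_ge_atTop 0).mono fun t ht ↦
      mul_nonneg ht (psi2_nonneg t)))

/-- If `α` is irrational, equivalent neither to `(1+√5)/2` nor to `(1+√17)/2`,
with `aₙ ∈ {1, 3}` for infinitely many `n`, and for infinitely many `n` one has
`aₙ₋₁ = 3, aₙ = 1, aₙ₊₁ = 3`, then `𝔨(α) ≤ 136/145`. -/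
theorem stmt_15 (α : ℝ) (hα : Irrational α)
    (h5 : ¬ CFEquiv α ((1 + Real.sqrt 5) / 2))
    (h17 : ¬ CFEquiv α ((1 + Real.sqrt 17) / 2))
    (hmem : ∃ᶠ n in atTop, cfDigit α n = 1 ∨ cfDigit α n = 3)
    (hpat : ∃ᶠ n in atTop,
      cfDigit α n = 3 ∧ cfDigit α (n + 1) = 1 ∧ cfDigit α (n + 2) = 3) :
    kConst α ≤ 136 / 145 :=
  stmt_15_general α hα hpat
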